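/- In the Heisenberg group (the free step-2 nilpotent group G²(E) on a 2-dimensional inner product space E with orthonormal frame X, Y), the Carnot–Carathéodory distance from the identity to a horizontal element a·X + b·Y equals sqrt(a² + b²), i.e. ρ(0, zZ + z̄Z̄) = |z| where z = a + ib. -/

import Mathlib

/-!
Identifying the control `(u, v)` with the complex function `u + i v`, the length of a
horizontal curve is `∫ |u + i v|`, while its horizontal endpoint is `∫ (u + i v) = a + i b`.
The triangle inequality for integrals bounds every length below by `|a + i b|`, and the
straight segment `t ↦ t (a X + b Y)` sweeps no area and attains this bound.
-/

open MeasureTheory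

/-- The Carnot–Carathéodory distance from the identity in the Heisenberg group
`G²(ℝ²)`, in exponential coordinates: the point is `a·X + b·Y + σ·X∧Y`.  Horizontal
curves are absolutely continuous curves `Γ = γ + γ⁽²⁾` with `γ' = u` and
`(γ⁽²⁾)' = ½ (x u₂ - y u₁)`, encoded via their `L¹` control `u = (u₁, u₂)`. -/
noncomputable def heisCC (a b σ : ℝ) : ℝ :=
  sInf {L : ℝ | ∃ u v : ℝ → ℝ,
    IntervalIntegrable u volume 0 1 ∧ IntervalIntegrable v volume 0 1 ∧
    (∫ t in (0:ℝ)..1, u t) = a ∧ (∫ t in (0:ℝ)..1, v t) = b ∧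
    (∫ t in (0:ℝ)..1,
        (1 / 2) * ((∫ s in (0:ℝ)..t, u s) * v t - (∫ s in (0:ℝ)..t, v s) * u t)) = σ ∧
    L = ∫ t in (0:ℝ)..1, Real.sqrt (u t ^ 2 + v t ^ 2)}

open Complex in
theorem sqrt_sq_add_sq_integral_le_integral {u v : ℝ → ℝ} {a b : ℝ} (hab : a ≤ b)
    (hu : IntervalIntegrable u volume a b) (hv : IntervalIntegrable v volume a b) :
    √((∫ t in a..b, u t) ^ 2 + (∫ t in a..b, v t) ^ 2) ≤ ∫ t in a..b, √(u t ^ 2 + v t ^ 2) := by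
  have hu' : IntervalIntegrable (fun t => (u t : ℂ)) volume a b := ⟨hu.1.ofReal, hu.2.ofReal⟩
  have hv' : IntervalIntegrable (fun t => (v t : ℂ) * I) volume a b :=
    IntervalIntegrable.mul_const ⟨hv.1.ofReal, hv.2.ofReal⟩ I
  have h := intervalIntegral.norm_integral_le_integral_norm (μ := volume)
    (f := fun t => (u t : ℂ) + v t * I) hab
  rw [intervalIntegral.integral_add hu' hv', intervalIntegral.integral_mul_const,
    intervalIntegral.integral_ofReal, intervalIntegral.integral_ofReal] at h
  simpa only [norm_add_mul_I] using h

/-- The CC-distance from the identity to the horizontal element `a·X + b·Y`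
equals `√(a² + b²)`, i.e. `ρ(0, zZ + z̄Z̄) = |z|` with `z = a + ib`. -/
theorem stmt_5 (a b : ℝ) : heisCC a b 0 = Real.sqrt (a ^ 2 + b ^ 2) := by
  refine IsLeast.csInf_eq ⟨⟨fun _ => a, fun _ => b, intervalIntegrable_const,
    intervalIntegrable_const, by simp, by simp, ?_, by simp⟩, ?_⟩
  · simp only [intervalIntegral.integral_const, smul_eq_mul]
    simp [mul_right_comm]
  · rintro L ⟨u, v, hu, hv, rfl, rfl, -, rfl⟩
    exact sqrt_sq_add_sq_integral_le_integral zero_le_one hu hv
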